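/- Let R be a self-injective Boolean ring. Then R is complete: every nonempty subset of R has a supremum with respect to the partial order x ≤ y iff xy = x. (Proof route: show every annihilator ideal ann(Z) is principal, using that for an ideal I the map I ⊕ ann(I) → R, (x,z) ↦ x, extends to a map R → R given by multiplication by some a, and that ann(ann(ann(I))) = ann(I).) -/

import Mathlib

/-!
For an ideal `I` of a reduced ring, `I ∩ ann I = 0`, so `I ⊕ ann I` embeds in `R`. Self-injectivity
extends the projection `I ⊕ ann I → I ⊆ R` to an endomorphism of `R`, i.e. to multiplication by some
`a`; thus `a` acts as the identity on `I` and kills `ann I`. Taking `I` the ideal generated by `Z`, every upper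
bound `b` of `Z` has `1 - b ∈ ann I`, hence `(1 - b) a = 0`, i.e. `a ≤ b`.
-/

open Submodule

lemma isReduced_of_mul_self_eq {R : Type*} [MonoidWithZero R] (hB : ∀ x : R, x * x = x) :
    IsReduced R :=
  (isReduced_iff_pow_one_lt 2 one_lt_two).2 fun x hx => by rwa [sq, hB] at hx

lemma Submodule.disjoint_annihilator {R : Type*} [CommRing R] [IsReduced R]
    (I : Submodule R R) : Disjoint I I.annihilator := by
  refine disjoint_iff_inf_le.2 fun x ⟨hxI, hxJ⟩ => (mem_bot R).2 ?_
  have hxx : x * x = 0 := mem_annihilator.1 hxJ x hxI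
  exact IsReduced.eq_zero x ⟨2, by rwa [sq]⟩

lemma Module.Injective.exists_mul_eq_self_and_mul_eq_zero {R : Type*} [CommRing R]
    [Module.Injective R R] {I J : Submodule R R} (hIJ : Disjoint I J) :
    ∃ a : R, (∀ x ∈ I, x * a = x) ∧ ∀ y ∈ J, y * a = 0 := by
  set f : (I × J) →ₗ[R] R := I.subtype.coprod J.subtype
  have hf : Function.Injective f := by
    rw [← LinearMap.ker_eq_bot, LinearMap.ker_coprod_of_disjoint_range _ _
      (by simpa only [range_subtype] using hIJ)]
    simp only [ker_subtype, prod_bot]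
  obtain ⟨h, hh⟩ := Module.Injective.out f hf (I.subtype ∘ₗ LinearMap.fst R I J)
  have h_eq_mul (r : R) : h r = r * h 1 := by
    simpa only [smul_eq_mul, mul_one] using h.map_smul r 1
  refine ⟨h 1, fun x hx => ?_, fun y hy => ?_⟩
  · rw [← h_eq_mul]
    simpa [f] using hh (⟨x, hx⟩, 0)
  · rw [← h_eq_mul]
    simpa [f] using hh (0, ⟨y, hy⟩)

lemma one_sub_mem_annihilator_span {R : Type*} [CommRing R] {Z : Set R} {b : R}
    (hb : ∀ z ∈ Z, z * b = z) : 1 - b ∈ (span R Z).annihilator :=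
  (mem_annihilator_span Z _).2 fun ⟨z, hz⟩ => by
    rw [smul_eq_mul, sub_mul, one_mul, mul_comm, hb z hz, sub_self]

/-- A self-injective Boolean ring is complete: every nonempty subset has a supremum
for the order x ≤ y iff xy = x. -/
theorem stmt_6 (R : Type*) [CommRing R] (hB : ∀ x : R, x * x = x)
    [Module.Injective R R] :
    ∀ Z : Set R, Z.Nonempty → ∃ a : R, (∀ z ∈ Z, z * a = z) ∧
      ∀ b : R, (∀ z ∈ Z, z * b = z) → a * b = a := by
  intro Z _
  have := isReduced_of_mul_self_eq hB
  obtain ⟨a, ha_fix, ha_kill⟩ :=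
    Module.Injective.exists_mul_eq_self_and_mul_eq_zero (span R Z).disjoint_annihilator
  refine ⟨a, fun z hz => ha_fix z (subset_span hz), fun b hb => ?_⟩
  have hba : (1 - b) * a = 0 := ha_kill _ (one_sub_mem_annihilator_span hb)
  rw [sub_mul, one_mul, sub_eq_zero] at hba
  rw [mul_comm, ← hba]
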